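/- Zeroness characterisation: Let P be a special product rule and 𝒜 = (X, F, Δ) a polynomial P-automaton with finite variable set X = {x₁,…,x_k} and initial variable x₁, and let I_n be the ideal of ℚ[X] generated by {Δ_w x₁ : |w| ≤ n}. Let N ∈ ℕ be the stabilisation index of the chain I₀ ⊆ I₁ ⊆ ⋯, i.e., an index with I_N = I_{N+1}. Then ⟦x₁⟧_𝒜 is the zero series if, and only if, ⟦x₁⟧_𝒜(w) = 0 for every word w ∈ Σ* of length at most N. -/

import Mathlib

namespace PSeries

/-- A (formal power) series over alphabet `A` with rational coefficients. -/
abbrev Series (A : Type) : Type := List A → ℚ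

/-- Left derivative of a series by a letter. -/
def deriv {A : Type} (a : A) (f : Series A) : Series A := fun w => f (a :: w)

/-- Right derivative of a series by a letter. -/
def derivR {A : Type} (b : A) (f : Series A) : Series A := fun w => f (w ++ [b])

/-- Reversal of a series. -/
def rev {A : Type} (f : Series A) : Series A := fun w => f w.reverse

/-- Terms over a set of variables `X`:  `u ::= x | 0 | c·u | u + v | u * v`. -/
inductive Term (X : Type) : Type
  | var : X → Term X
  | zero : Term X
  | smul : ℚ → Term X → Term X
  | add : Term X → Term X → Term X
  | mul : Term X → Term X → Term X

namespace Term

/-- Simultaneous substitution of terms for variables. -/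
def subst {X Y : Type} : Term X → (X → Term Y) → Term Y
  | var x, ρ => ρ x
  | zero, _ => zero
  | smul c u, ρ => smul c (u.subst ρ)
  | add u v, ρ => add (u.subst ρ) (v.subst ρ)
  | mul u v, ρ => mul (u.subst ρ) (v.subst ρ)

/-- Semantics of a term on series, with the product symbol interpreted by `m`. -/
def evalS {A X : Type} (m : Series A → Series A → Series A) :
    Term X → (X → Series A) → Series A
  | var x, ρ => ρ x
  | zero, _ => 0
  | smul c u, ρ => c • u.evalS m ρ
  | add u v, ρ => u.evalS m ρ + v.evalS m ρ
  | mul u v, ρ => m (u.evalS m ρ) (v.evalS m ρ)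

/-- Evaluation of a term in the rationals (product is rational multiplication). -/
def evalQ {X : Type} : Term X → (X → ℚ) → ℚ
  | var x, F => F x
  | zero, _ => 0
  | smul c u, F => c * u.evalQ F
  | add u v, F => u.evalQ F + v.evalQ F
  | mul u v, F => u.evalQ F * v.evalQ F

/-- Evaluation of a term in a commutative `ℚ`-algebra. -/
def evalA {R : Type} [CommRing R] [Algebra ℚ R] {X : Type} :
    Term X → (X → R) → R
  | var x, ρ => ρ x
  | zero, _ => 0
  | smul c u, ρ => c • u.evalA ρ
  | add u v, ρ => u.evalA ρ + v.evalA ρ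
  | mul u v, ρ => u.evalA ρ * v.evalA ρ

end Term

/-- `m` is the `P`-product for the product rule `P`; that is, `m` satisfies the
two defining equations `(f*g)(ε) = f(ε)·g(ε)` and `δ_a (f*g) = P(f, δ_a f, g, δ_a g)`. -/
def IsPProduct {A : Type} (P : Term (Fin 4)) (m : Series A → Series A → Series A) : Prop :=
  (∀ f g : Series A, m f g [] = f [] * g []) ∧
  (∀ (f g : Series A) (a : A),
    deriv a (m f g) = P.evalS m ![f, deriv a f, g, deriv a g])

/-- The smallest congruence on terms generated by the axioms of
commutative (not necessarily unital) `ℚ`-algebras. -/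
inductive TEq {X : Type} : Term X → Term X → Prop
  | refl (u : Term X) : TEq u u
  | symm {u v : Term X} : TEq u v → TEq v u
  | trans {u v w : Term X} : TEq u v → TEq v w → TEq u w
  | smul_congr (c : ℚ) {u v : Term X} : TEq u v → TEq (.smul c u) (.smul c v)
  | add_congr {u u' v v' : Term X} : TEq u u' → TEq v v' → TEq (.add u v) (.add u' v')
  | mul_congr {u u' v v' : Term X} : TEq u u' → TEq v v' → TEq (.mul u v) (.mul u' v')
  | one_smul (u : Term X) : TEq (.smul 1 u) u
  | smul_smul (c d : ℚ) (u : Term X) : TEq (.smul c (.smul d u)) (.smul (c * d) u)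
  | add_smul (c d : ℚ) (u : Term X) : TEq (.smul (c + d) u) (.add (.smul c u) (.smul d u))
  | smul_add (c : ℚ) (u v : Term X) : TEq (.smul c (.add u v)) (.add (.smul c u) (.smul c v))
  | add_zero (u : Term X) : TEq (.add u .zero) u
  | add_assoc (u v w : Term X) : TEq (.add (.add u v) w) (.add u (.add v w))
  | add_comm (u v : Term X) : TEq (.add u v) (.add v u)
  | neg_cancel (u : Term X) : TEq (.add u (.smul (-1) u)) .zero
  | mul_addl (u v w : Term X) : TEq (.mul (.add u v) w) (.add (.mul u w) (.mul v w))
  | mul_smull (c : ℚ) (u v : Term X) : TEq (.mul (.smul c u) v) (.smul c (.mul u v))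
  | mul_assoc (u v w : Term X) : TEq (.mul (.mul u v) w) (.mul u (.mul v w))
  | mul_comm (u v : Term X) : TEq (.mul u v) (.mul v u)

/-- A product rule `P` (a term over the variables `x = 0, ẋ = 1, y = 2, ẏ = 3`)
is special: it satisfies (P-add), (P-assoc) and (P-comm) up to the congruence `TEq`.
In the first two equations the six variables are `x = 0, ẋ = 1, y = 2, ẏ = 3, z = 4, ż = 5`. -/
def Special (P : Term (Fin 4)) : Prop :=
  TEq (P.subst (![.add (.var 0) (.var 2), .add (.var 1) (.var 3), .var 4, .var 5] :
        Fin 4 → Term (Fin 6)))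
      (.add (P.subst (![.var 0, .var 1, .var 4, .var 5] : Fin 4 → Term (Fin 6)))
            (P.subst (![.var 2, .var 3, .var 4, .var 5] : Fin 4 → Term (Fin 6)))) ∧
  TEq (P.subst (![.var 0, .var 1, .mul (.var 2) (.var 4),
        P.subst (![.var 2, .var 3, .var 4, .var 5] : Fin 4 → Term (Fin 6))] :
        Fin 4 → Term (Fin 6)))
      (P.subst (![.mul (.var 0) (.var 2),
        P.subst (![.var 0, .var 1, .var 2, .var 3] : Fin 4 → Term (Fin 6)), .var 4, .var 5] :
        Fin 4 → Term (Fin 6))) ∧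
  TEq P (P.subst (![.var 2, .var 3, .var 0, .var 1] : Fin 4 → Term (Fin 4)))

/-- A binary operation on series is bilinear, associative and commutative. -/
def IsBAC {A : Type} (m : Series A → Series A → Series A) : Prop :=
  (∀ f g h : Series A, m (f + g) h = m f h + m g h) ∧
  (∀ (c : ℚ) (f g : Series A), m (c • f) g = c • m f g) ∧
  (∀ f g h : Series A, m f (g + h) = m f g + m f h) ∧
  (∀ (c : ℚ) (f g : Series A), m f (c • g) = c • m f g) ∧
  (∀ f g h : Series A, m (m f g) h = m f (m g h)) ∧
  (∀ f g : Series A, m f g = m g f)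

/-- The smallest set of series containing `0` and the generators `G`, closed under
scalar multiplication, addition, and the product `m`. -/
inductive InAlg {A : Type} (m : Series A → Series A → Series A) (G : Set (Series A)) :
    Series A → Prop
  | zero : InAlg m G 0
  | gen {g : Series A} : g ∈ G → InAlg m G g
  | smul (c : ℚ) {f : Series A} : InAlg m G f → InAlg m G (c • f)
  | add {f g : Series A} : InAlg m G f → InAlg m G g → InAlg m G (f + g)
  | mul {f g : Series A} : InAlg m G f → InAlg m G g → InAlg m G (m f g)

/-- `f` is `P`-finite (w.r.t. the `P`-product `m`): there are finitely many generators
`g 0 = f, g 1, …` all of whose left derivatives lie in the algebra they generate. -/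
def PFinite {A : Type} (m : Series A → Series A → Series A) (f : Series A) : Prop :=
  ∃ (k : ℕ) (g : Fin (k + 1) → Series A),
    g 0 = f ∧ ∀ (i : Fin (k + 1)) (a : A), InAlg m (Set.range g) (deriv a (g i))

/-- A `P`-automaton: output function `out` and transition function `tr`. -/
structure PAutomaton (A X : Type) where
  out : X → ℚ
  tr : A → X → Term X

/-- The `P`-extension of a function `D : X → Term X` to all terms. -/
def pext {X : Type} (P : Term (Fin 4)) (D : X → Term X) : Term X → Term X
  | .var x => D x
  | .zero => .zero
  | .smul c u => .smul c (pext P D u)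
  | .add u v => .add (pext P D u) (pext P D v)
  | .mul u v => P.subst ![u, pext P D u, v, pext P D v]

/-- Homomorphic extension of the output function of a `P`-automaton to all terms. -/
def PAutomaton.outT {A X : Type} (𝒜 : PAutomaton A X) (u : Term X) : ℚ :=
  u.evalQ 𝒜.out

/-- Extension of the (`P`-extended) transition function of a `P`-automaton to words. -/
def trWord {A X : Type} (P : Term (Fin 4)) (𝒜 : PAutomaton A X) :
    List A → Term X → Term X
  | [], u => u
  | a :: w, u => trWord P 𝒜 w (pext P (𝒜.tr a) u)

/-- The semantics of a `P`-automaton: the unique map with `⟦α⟧(ε) = F(α)` and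
`δ_a ⟦α⟧ = ⟦Δ̃_a α⟧`; concretely, `⟦α⟧(w) = F(Δ̃_w α)`. -/
def asem {A X : Type} (P : Term (Fin 4)) (𝒜 : PAutomaton A X) (u : Term X) : Series A :=
  fun w => (trWord P 𝒜 w u).evalQ 𝒜.out

/-- `ℚ[X]⁰`: polynomials in commuting variables `X` with zero constant term. -/
noncomputable def Aug (X : Type) : Submodule ℚ (MvPolynomial X ℚ) where
  carrier := {p | MvPolynomial.coeff 0 p = 0}
  add_mem' := by
    intro a b ha hb
    simp only [Set.mem_setOf_eq, MvPolynomial.coeff_add] at *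
    rw [ha, hb, add_zero]
  zero_mem' := by simp
  smul_mem' := by
    intro c p hp
    simp only [Set.mem_setOf_eq, MvPolynomial.coeff_smul] at *
    rw [hp, smul_zero]

/-- The variable `x` as an element of `ℚ[X]⁰`. -/
noncomputable def Aug.var {X : Type} (x : X) : Aug X :=
  ⟨MvPolynomial.X x, by
    show MvPolynomial.coeff 0 (MvPolynomial.X x) = 0
    simp [MvPolynomial.coeff_X']⟩

/-- The product of two elements of `ℚ[X]⁰`, again in `ℚ[X]⁰`. -/
noncomputable def Aug.mul {X : Type} (p q : Aug X) : Aug X :=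
  ⟨(p : MvPolynomial X ℚ) * (q : MvPolynomial X ℚ), by
    show MvPolynomial.coeff 0 _ = 0
    have hp : MvPolynomial.constantCoeff (p : MvPolynomial X ℚ) = 0 := p.2
    have hq : MvPolynomial.constantCoeff (q : MvPolynomial X ℚ) = 0 := q.2
    have := map_mul MvPolynomial.constantCoeff (p : MvPolynomial X ℚ) (q : MvPolynomial X ℚ)
    simpa [MvPolynomial.constantCoeff_eq, hp, hq] using this⟩

/-- A polynomial `P`-automaton over variables `X`. -/
structure PolyAutomaton (A X : Type) where
  out : X → ℚ
  tr : A → X → Aug X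

/-- Extension to words of a family of (extended) transition maps on `ℚ[X]⁰`. -/
noncomputable def trWordP {A X : Type} (Dt : A → (Aug X →ₗ[ℚ] Aug X)) : List A → Aug X → Aug X
  | [], p => p
  | a :: w, p => trWordP Dt w (Dt a p)

/-- The ideal of `ℚ[X]` generated by all polynomials reachable from the initial
variable `x1` by words of length at most `n`. -/
noncomputable def reachIdeal {A X : Type} (Dt : A → (Aug X →ₗ[ℚ] Aug X)) (x1 : X) (n : ℕ) :
    Ideal (MvPolynomial X ℚ) :=
  Ideal.span {p : MvPolynomial X ℚ |
    ∃ w : List A, w.length ≤ n ∧ p = ((trWordP Dt w (Aug.var x1) : Aug X) : MvPolynomial X ℚ)}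

/-!
For a special product rule, `P(x, x', 0, 0) = 0` (additivity gives `P(0, 0, z, z') = 0`, then
swap by commutativity), so for `r ∈ ℚ[X]⁰` the derivative `Δ_a (r · q) = P(r, Δ_a r, q, Δ_a q)`
lies in the ideal generated by `q` and `Δ_a q`. Hence `Δ_a` maps every element of `I_n ∩ ℚ[X]⁰` into `I_{n+1}`, and once
`I_N = I_{N+1}` induction on `w` puts every `Δ_w x₁` in `I_N`. The evaluation at `F` is a ring
homomorphism that vanishes on the generators of `I_N`, hence on all of `I_N`.
-/

namespace Term

lemma evalA_subst {R : Type} [CommRing R] [Algebra ℚ R] {X Y : Type}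
    (u : Term X) (ρ : X → Term Y) (σ : Y → R) :
    (u.subst ρ).evalA σ = u.evalA (fun x => (ρ x).evalA σ) := by
  induction u with
  | var x => rfl
  | zero => rfl
  | smul c u ih => simp only [subst, evalA, ih]
  | add u v ihu ihv => simp only [subst, evalA, ihu, ihv]
  | mul u v ihu ihv => simp only [subst, evalA, ihu, ihv]

lemma map_evalA {R S : Type} [CommRing R] [Algebra ℚ R] [CommRing S] [Algebra ℚ S]
    (φ : R →ₐ[ℚ] S) {X : Type} (u : Term X) (ρ : X → R) :
    φ (u.evalA ρ) = u.evalA (fun x => φ (ρ x)) := by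
  induction u with
  | var x => rfl
  | zero => exact map_zero φ
  | smul c u ih => simp only [evalA, map_smul, ih]
  | add u v ihu ihv => simp only [evalA, map_add, ihu, ihv]
  | mul u v ihu ihv => simp only [evalA, map_mul, ihu, ihv]

lemma evalA_comp_vecCons {R : Type} [CommRing R] [Algebra ℚ R] {X : Type} {n : ℕ}
    (u : Term X) (ρ : Fin n → Term X) (σ : X → R) :
    (fun i => (Matrix.vecCons u ρ i).evalA σ) =
      Matrix.vecCons (u.evalA σ) (fun i => (ρ i).evalA σ) := by
  funext i
  exact Fin.cases rfl (fun _ => rfl) i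

end Term

lemma TEq.evalA_eq {R : Type} [CommRing R] [Algebra ℚ R] {X : Type} {u v : Term X}
    (h : TEq u v) (ρ : X → R) : u.evalA ρ = v.evalA ρ := by
  induction h with
  | refl u => rfl
  | symm _ ih => exact ih.symm
  | trans _ _ ih₁ ih₂ => exact ih₁.trans ih₂
  | smul_congr c _ ih => simp [Term.evalA, ih]
  | add_congr _ _ ih₁ ih₂ => simp [Term.evalA, ih₁, ih₂]
  | mul_congr _ _ ih₁ ih₂ => simp [Term.evalA, ih₁, ih₂]
  | one_smul u => simp [Term.evalA]
  | smul_smul c d u => simp [Term.evalA, _root_.smul_smul]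
  | add_smul c d u => simp [Term.evalA, _root_.add_smul]
  | smul_add c u v => simp [Term.evalA, _root_.smul_add]
  | add_zero u => simp [Term.evalA]
  | add_assoc u v w => simp [Term.evalA, _root_.add_assoc]
  | add_comm u v => simp [Term.evalA, _root_.add_comm]
  | neg_cancel u => simp [Term.evalA]
  | mul_addl u v w => simp [Term.evalA, add_mul]
  | mul_smull c u v => simp [Term.evalA]
  | mul_assoc u v w => simp [Term.evalA, _root_.mul_assoc]
  | mul_comm u v => simp [Term.evalA, _root_.mul_comm]

namespace Special

variable {P : Term (Fin 4)} {R : Type} [CommRing R] [Algebra ℚ R]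

lemma evalA_zero_zero_left (hP : Special P) (z z' : R) : P.evalA ![0, 0, z, z'] = 0 := by
  have h := hP.1.evalA_eq (![0, 0, 0, 0, z, z'] : Fin 6 → R)
  simpa [Term.evalA, Term.evalA_subst, Term.evalA_comp_vecCons, Matrix.vec_single_eq_const]
    using h

lemma evalA_zero_zero_right (hP : Special P) (x x' : R) : P.evalA ![x, x', 0, 0] = 0 := by
  rw [hP.2.2.evalA_eq, Term.evalA_subst]
  convert hP.evalA_zero_zero_left x x' using 2
  funext i
  fin_cases i <;> rfl

lemma evalA_mem_span (hP : Special P) (x x' y y' : R) :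
    P.evalA ![x, x', y, y'] ∈ Ideal.span {y, y'} := by
  set I := Ideal.span ({y, y'} : Set R)
  have hy : Ideal.Quotient.mk I y = 0 :=
    Ideal.Quotient.eq_zero_iff_mem.mpr (Ideal.subset_span (by simp))
  have hy' : Ideal.Quotient.mk I y' = 0 :=
    Ideal.Quotient.eq_zero_iff_mem.mpr (Ideal.subset_span (by simp))
  have hargs : (fun i => Ideal.Quotient.mkₐ ℚ I (![x, x', y, y'] i)) =
      ![Ideal.Quotient.mk I x, Ideal.Quotient.mk I x', 0, 0] := by
    funext i
    fin_cases i <;> simp [hy, hy']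
  rw [← Ideal.Quotient.eq_zero_iff_mem, ← Ideal.Quotient.mkₐ_eq_mk ℚ, Term.map_evalA, hargs]
  exact hP.evalA_zero_zero_right _ _

end Special

section Aug

variable {X : Type}

lemma sub_C_constantCoeff_mem_Aug (r : MvPolynomial X ℚ) :
    r - MvPolynomial.C (MvPolynomial.constantCoeff r) ∈ Aug X := by
  show MvPolynomial.coeff 0 _ = 0
  simp [← MvPolynomial.constantCoeff_eq]

def IsPDerivation (P : Term (Fin 4)) (D : Aug X →ₗ[ℚ] Aug X) : Prop :=
  ∀ p q : Aug X, ((D (Aug.mul p q) : Aug X) : MvPolynomial X ℚ) =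
    P.evalA ![(p : MvPolynomial X ℚ), ((D p : Aug X) : MvPolynomial X ℚ),
      (q : MvPolynomial X ℚ), ((D q : Aug X) : MvPolynomial X ℚ)]

/-- Writing `r = c + r₀` with `r₀ ∈ ℚ[X]⁰` gives `D (r • q) = c • D q + P(r₀, D r₀, q, D q)`,
which lies in any ideal containing `q` and `D q`. -/
lemma IsPDerivation.coe_apply_mem_of_mem_span {P : Term (Fin 4)} (hP : Special P)
    {D : Aug X →ₗ[ℚ] Aug X} (hD : IsPDerivation P D)
    {S : Set (MvPolynomial X ℚ)} {J : Ideal (MvPolynomial X ℚ)} (hS : S ⊆ Aug X)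
    (hSJ : Ideal.span S ≤ J)
    (hDS : ∀ q : Aug X, (q : MvPolynomial X ℚ) ∈ S → ((D q : Aug X) : MvPolynomial X ℚ) ∈ J)
    {q : Aug X} (hq : (q : MvPolynomial X ℚ) ∈ Ideal.span S) :
    ((D q : Aug X) : MvPolynomial X ℚ) ∈ J := by
  suffices h : ∀ x ∈ Ideal.span S, ∃ q : Aug X, (q : MvPolynomial X ℚ) = x ∧
      ((D q : Aug X) : MvPolynomial X ℚ) ∈ J by
    obtain ⟨q', hq', hDq'⟩ := h _ hq
    rwa [Subtype.coe_injective hq'] at hDq'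
  intro x hx
  induction hx using Submodule.span_induction with
  | mem x hx => exact ⟨⟨x, hS hx⟩, rfl, hDS _ hx⟩
  | zero => exact ⟨0, rfl, by simp⟩
  | add x y _ _ hx hy =>
    obtain ⟨qx, rfl, hDx⟩ := hx
    obtain ⟨qy, rfl, hDy⟩ := hy
    exact ⟨qx + qy, rfl, by simpa using J.add_mem hDx hDy⟩
  | smul r x hxS hx =>
    obtain ⟨q, rfl, hDq⟩ := hx
    set c := MvPolynomial.constantCoeff r
    let r₀ : Aug X := ⟨r - MvPolynomial.C c, sub_C_constantCoeff_mem_Aug r⟩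
    refine ⟨c • q + Aug.mul r₀ q, ?_, ?_⟩
    · show c • (q : MvPolynomial X ℚ) + (r - MvPolynomial.C c) * (q : MvPolynomial X ℚ) =
        r • (q : MvPolynomial X ℚ)
      rw [smul_eq_mul, MvPolynomial.smul_eq_C_mul]
      ring
    · rw [map_add, map_smul, Submodule.coe_add, Submodule.coe_smul, MvPolynomial.smul_eq_C_mul,
        hD]
      refine J.add_mem (J.mul_mem_left _ hDq) (Ideal.span_le.mpr ?_ (hP.evalA_mem_span _ _ _ _))
      rintro y (rfl | rfl)
      exacts [hSJ hxS, hDq]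

end Aug

section Reach

variable {A X : Type} (Dt : A → (Aug X →ₗ[ℚ] Aug X)) (x1 : X)

lemma trWordP_append_singleton (w : List A) (a : A) (p : Aug X) :
    trWordP Dt (w ++ [a]) p = Dt a (trWordP Dt w p) := by
  induction w generalizing p with
  | nil => rfl
  | cons b w ih => exact ih (Dt b p)

lemma coe_trWordP_mem_reachIdeal {n : ℕ} {w : List A} (hw : w.length ≤ n) :
    ((trWordP Dt w (Aug.var x1) : Aug X) : MvPolynomial X ℚ) ∈ reachIdeal Dt x1 n :=
  Ideal.subset_span ⟨w, hw, rfl⟩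

lemma reachIdeal_mono : Monotone (reachIdeal Dt x1) := by
  intro n m hnm
  refine Ideal.span_mono ?_
  rintro _ ⟨w, hw, rfl⟩
  exact ⟨w, hw.trans hnm, rfl⟩

variable {Dt x1}

lemma coe_apply_mem_reachIdeal_succ {P : Term (Fin 4)} (hP : Special P)
    (hDt : ∀ a, IsPDerivation P (Dt a)) (a : A) {n : ℕ} {q : Aug X}
    (hq : (q : MvPolynomial X ℚ) ∈ reachIdeal Dt x1 n) :
    ((Dt a q : Aug X) : MvPolynomial X ℚ) ∈ reachIdeal Dt x1 (n + 1) := by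
  refine (hDt a).coe_apply_mem_of_mem_span hP ?_ (reachIdeal_mono Dt x1 n.le_succ) ?_ hq
  · rintro _ ⟨w, -, rfl⟩
    exact (trWordP Dt w (Aug.var x1)).2
  · rintro q ⟨w, hw, hqw⟩
    rw [Subtype.coe_injective hqw, ← trWordP_append_singleton]
    exact coe_trWordP_mem_reachIdeal Dt x1 (by simpa using hw)

lemma coe_trWordP_mem_reachIdeal_of_eq_succ {P : Term (Fin 4)} (hP : Special P)
    (hDt : ∀ a, IsPDerivation P (Dt a)) {N : ℕ}
    (hN : reachIdeal Dt x1 N = reachIdeal Dt x1 (N + 1)) (w : List A) :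
    ((trWordP Dt w (Aug.var x1) : Aug X) : MvPolynomial X ℚ) ∈ reachIdeal Dt x1 N := by
  induction w using List.reverseRecOn with
  | nil => exact coe_trWordP_mem_reachIdeal Dt x1 (Nat.zero_le N)
  | append_singleton w a ih =>
    rw [trWordP_append_singleton, hN]
    exact coe_apply_mem_reachIdeal_succ hP hDt a ih

end Reach

theorem zeroness_characterisation_general {A X : Type}
    (P : Term (Fin 4)) (hP : Special P)
    (𝒜 : PolyAutomaton A X) (x1 : X)
    (Dt : A → (Aug X →ₗ[ℚ] Aug X))
    (hmul : ∀ (a : A) (p q : Aug X),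
      ((Dt a (Aug.mul p q) : Aug X) : MvPolynomial X ℚ) =
        Term.evalA P ![(p : MvPolynomial X ℚ), ((Dt a p : Aug X) : MvPolynomial X ℚ),
          ((q : Aug X) : MvPolynomial X ℚ), ((Dt a q : Aug X) : MvPolynomial X ℚ)])
    (N : ℕ) (hN : reachIdeal Dt x1 N = reachIdeal Dt x1 (N + 1)) :
    (∀ w : List A,
        MvPolynomial.eval 𝒜.out ((trWordP Dt w (Aug.var x1) : Aug X) : MvPolynomial X ℚ) = 0) ↔
    (∀ w : List A, w.length ≤ N →
        MvPolynomial.eval 𝒜.out ((trWordP Dt w (Aug.var x1) : Aug X) : MvPolynomial X ℚ) = 0) := by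
  refine ⟨fun h w _ => h w, fun h w => ?_⟩
  have hker : reachIdeal Dt x1 N ≤ RingHom.ker (MvPolynomial.eval 𝒜.out) := by
    refine Ideal.span_le.mpr ?_
    rintro _ ⟨w, hw, rfl⟩
    exact h w hw
  exact hker (coe_trWordP_mem_reachIdeal_of_eq_succ hP hmul hN w)

/-- **Zeroness characterisation.** If `N` is a stabilisation index of the chain of
reachability ideals, then the recognised series `⟦x₁⟧_𝒜(w) = F(Δ_w x₁)` is the zero
series iff it vanishes on all words of length at most `N`. -/
theorem zeroness_characterisation {A X : Type} [Fintype A] [Fintype X]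
    (P : Term (Fin 4)) (hP : Special P)
    (𝒜 : PolyAutomaton A X) (x1 : X)
    (Dt : A → (Aug X →ₗ[ℚ] Aug X))
    (hvar : ∀ (a : A) (x : X), Dt a (Aug.var x) = 𝒜.tr a x)
    (hmul : ∀ (a : A) (p q : Aug X),
      ((Dt a (Aug.mul p q) : Aug X) : MvPolynomial X ℚ) =
        Term.evalA P ![(p : MvPolynomial X ℚ), ((Dt a p : Aug X) : MvPolynomial X ℚ),
          ((q : Aug X) : MvPolynomial X ℚ), ((Dt a q : Aug X) : MvPolynomial X ℚ)])
    (N : ℕ) (hN : reachIdeal Dt x1 N = reachIdeal Dt x1 (N + 1)) :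
    (∀ w : List A,
        MvPolynomial.eval 𝒜.out ((trWordP Dt w (Aug.var x1) : Aug X) : MvPolynomial X ℚ) = 0) ↔
    (∀ w : List A, w.length ≤ N →
        MvPolynomial.eval 𝒜.out ((trWordP Dt w (Aug.var x1) : Aug X) : MvPolynomial X ℚ) = 0) :=
  zeroness_characterisation_general P hP 𝒜 x1 Dt hmul N hN

end PSeries
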